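/- For any E ⊆ ℝ₊, the macroscopic Hausdorff dimension of E is at most the pixel density of E: Dim_H E ≤ Den_pix E. -/
import Mathlib


open MeasureTheory Filter Set

noncomputable section

/-- The annuli `S_0 = [0,1)`, `S_n = [2^{n-1}, 2^n)` for `n ≥ 1`. -/
def Sann (n : ℕ) : Set ℝ := if n = 0 then Ico (0:ℝ) 1 else Ico ((2:ℝ)^(n-1)) ((2:ℝ)^n)

/-- `ν_ρ^n(E)`: infimum of `Σ (Leb(I_i)/2^n)^ρ` over finite coverings of `E ∩ S_n`
by nontrivial intervals with integer endpoints contained in `S_n`. -/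
def nuCov (E : Set ℝ) (ρ : ℝ) (n : ℕ) : ℝ :=
  sInf { x : ℝ | ∃ (m : ℕ) (a b : Fin m → ℤ), 0 < m ∧ (∀ i, a i < b i) ∧
    (∀ i, Ico ((a i : ℝ)) ((b i : ℝ)) ⊆ Sann n) ∧
    (E ∩ Sann n ⊆ ⋃ i, Ico ((a i : ℝ)) ((b i : ℝ))) ∧
    x = ∑ i, ((((b i : ℝ)) - ((a i : ℝ))) / 2^n) ^ ρ }

/-- The macroscopic Hausdorff dimension of Barlow–Taylor. -/
def DimH (E : Set ℝ) : ℝ :=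
  sInf { ρ : ℝ | 0 ≤ ρ ∧ Summable (fun n => nuCov E ρ n) }
noncomputable section

/-- The pixel set of `E`: integers at distance at most one from `E`. -/
def pix (E : Set ℝ) : Set ℕ := { k : ℕ | ∃ x ∈ E, |(k : ℝ) - x| ≤ 1 }

/-- The logarithmic density of `E`. -/
def DenLog (E : Set ℝ) : ℝ :=
  limsup (fun n : ℕ => Real.logb 2 (volume (E ∩ Icc 1 ((2:ℝ)^n))).toReal / n) atTop

/-- The pixel density of `E`. -/
def DenPix (E : Set ℝ) : ℝ :=
  limsup (fun n : ℕ => Real.logb 2 ((pix (E ∩ Icc 1 ((2:ℝ)^n))).ncard : ℝ) / n) atTop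

-- ==================== auxiliary lemmas ====================

lemma pix_subset_Iic (E : Set ℝ) (n : ℕ) :
    pix (E ∩ Icc 1 ((2:ℝ)^n)) ⊆ ↑(Finset.Iic (2^n + 1)) := by
  rintro k ⟨x, ⟨hxE, hx1, hx2⟩, hd⟩
  have h1 : (k:ℝ) - x ≤ 1 := (abs_le.1 hd).2
  have : (k:ℝ) ≤ ((2^n + 1 : ℕ) : ℝ) := by push_cast; linarith
  simpa [Finset.mem_Iic] using (Nat.cast_le.1 this)

lemma pix_finite (E : Set ℝ) (n : ℕ) : (pix (E ∩ Icc 1 ((2:ℝ)^n))).Finite :=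
  Set.Finite.subset (Finset.Iic (2^n + 1)).finite_toSet (pix_subset_Iic E n)

lemma pix_ncard_le (E : Set ℝ) (n : ℕ) :
    (pix (E ∩ Icc 1 ((2:ℝ)^n))).ncard ≤ 2^n + 2 := by
  have h := Set.ncard_le_ncard (pix_subset_Iic E n) (Finset.Iic (2^n + 1)).finite_toSet
  rwa [Set.ncard_coe_finset, Nat.card_Iic] at h

lemma u_nonneg (E : Set ℝ) (n : ℕ) :
    0 ≤ Real.logb 2 ((pix (E ∩ Icc 1 ((2:ℝ)^n))).ncard : ℝ) / n := by
  apply div_nonneg _ (Nat.cast_nonneg n)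
  rcases Nat.eq_zero_or_pos (pix (E ∩ Icc 1 ((2:ℝ)^n))).ncard with h | h
  · simp [h]
  · exact Real.logb_nonneg (by norm_num) (by exact_mod_cast h)

lemma u_le_three (E : Set ℝ) (n : ℕ) :
    Real.logb 2 ((pix (E ∩ Icc 1 ((2:ℝ)^n))).ncard : ℝ) / n ≤ 3 := by
  rcases Nat.eq_zero_or_pos n with hn | hn
  · simp [hn]
  have hnR : (0:ℝ) < n := by exact_mod_cast hn
  have hNle : ((pix (E ∩ Icc 1 ((2:ℝ)^n))).ncard : ℝ) ≤ (2:ℝ)^(n+2) := by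
    have h1 : (pix (E ∩ Icc 1 ((2:ℝ)^n))).ncard ≤ 2^(n+2) := by
      have := pix_ncard_le E n
      have h2 : 2^n + 2 ≤ 2^(n+2) := by
        have := Nat.one_le_two_pow (n := n)
        rw [pow_succ, pow_succ]; omega
      omega
    exact_mod_cast h1
  have hlogb : Real.logb 2 ((pix (E ∩ Icc 1 ((2:ℝ)^n))).ncard : ℝ) ≤ (n:ℝ) + 2 := by
    rcases Nat.eq_zero_or_pos (pix (E ∩ Icc 1 ((2:ℝ)^n))).ncard with h | h
    · simp [h]; positivity
    · calc Real.logb 2 ((pix (E ∩ Icc 1 ((2:ℝ)^n))).ncard : ℝ)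
          ≤ Real.logb 2 ((2:ℝ)^(n+2)) := by
            apply Real.logb_le_logb_of_le (by norm_num) (by exact_mod_cast h) hNle
        _ = (n:ℝ) + 2 := by
            rw [← Real.rpow_natCast 2 (n+2), Real.logb_rpow (by norm_num) (by norm_num)]
            push_cast; ring
  have h1n : (1:ℝ) ≤ n := by exact_mod_cast hn
  calc Real.logb 2 ((pix (E ∩ Icc 1 ((2:ℝ)^n))).ncard : ℝ) / n ≤ ((n:ℝ) + 2) / n := by
        gcongr
    _ ≤ 3 := by rw [div_le_iff₀ hnR]; linarith

lemma u_isBounded (E : Set ℝ) :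
    IsBoundedUnder (· ≤ ·) atTop
      (fun n : ℕ => Real.logb 2 ((pix (E ∩ Icc 1 ((2:ℝ)^n))).ncard : ℝ) / n) :=
  isBoundedUnder_of ⟨3, u_le_three E⟩

lemma denPix_nonneg (E : Set ℝ) : 0 ≤ DenPix E :=
  le_limsup_of_frequently_le (Frequently.of_forall (u_nonneg E)) (u_isBounded E)

lemma nuCov_nonneg (E : Set ℝ) (ρ : ℝ) (n : ℕ) : 0 ≤ nuCov E ρ n := by
  apply Real.sInf_nonneg
  rintro x ⟨m, a, b, -, hab, -, -, rfl⟩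
  exact Finset.sum_nonneg fun i _ => Real.rpow_nonneg
    (div_nonneg (by exact_mod_cast sub_nonneg.2 (hab i).le) (by positivity)) _

lemma nuCov_bddBelow (E : Set ℝ) (ρ : ℝ) (n : ℕ) :
    BddBelow { x : ℝ | ∃ (m : ℕ) (a b : Fin m → ℤ), 0 < m ∧ (∀ i, a i < b i) ∧
    (∀ i, Ico ((a i : ℝ)) ((b i : ℝ)) ⊆ Sann n) ∧
    (E ∩ Sann n ⊆ ⋃ i, Ico ((a i : ℝ)) ((b i : ℝ))) ∧
    x = ∑ i, ((((b i : ℝ)) - ((a i : ℝ))) / 2^n) ^ ρ } := by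
  refine ⟨0, ?_⟩
  rintro x ⟨m, a, b, -, hab, -, -, rfl⟩
  exact Finset.sum_nonneg fun i _ => Real.rpow_nonneg
    (div_nonneg (by exact_mod_cast sub_nonneg.2 (hab i).le) (by positivity)) _

lemma nuCov_le_card (E : Set ℝ) (ρ : ℝ) (n : ℕ) (hn : 1 ≤ n) :
    nuCov E ρ n ≤ (((pix (E ∩ Icc 1 ((2:ℝ)^n))).ncard : ℝ) + 1) * (((2:ℝ)^n)⁻¹) ^ ρ := by
  classical
  set P : ℤ := 2^(n-1) with hP
  have hPpos : (1:ℤ) ≤ P := by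
    have := pow_pos (by norm_num : (0:ℤ) < 2) (n-1); omega
  have hcast1 : ((P:ℝ)) = (2:ℝ)^(n-1) := by rw [hP]; push_cast; ring
  have hpow : (2:ℝ)^n = 2 * (2:ℝ)^(n-1) := by
    rw [← pow_succ']
    congr 1
    omega
  have hcast2 : (((2*P:ℤ)):ℝ) = (2:ℝ)^n := by
    push_cast
    rw [hpow, ← hcast1]
  have hSann : Sann n = Ico ((P:ℝ)) (((2*P : ℤ)):ℝ) := by
    rw [Sann, if_neg (by omega), hcast1, hcast2]
  set K : Finset ℤ := (Finset.Icc P (2*P-1)).filter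
    (fun k => ∃ x ∈ E, x ∈ Ico (k:ℝ) ((k:ℝ)+1)) with hK
  set m := K.card + 1 with hm
  set e := K.equivFin.symm with he
  set a : Fin m → ℤ := fun i => if h : (i:ℕ) < K.card then (e ⟨i, h⟩ : ℤ) else P with ha
  have haK : ∀ i, P ≤ a i ∧ a i ≤ 2*P - 1 := by
    intro i
    simp only [ha]
    split
    · next h =>
      have h2 := (e ⟨(i:ℕ), h⟩).2
      obtain ⟨h3, -⟩ := Finset.mem_filter.1 h2
      exact Finset.mem_Icc.1 h3
    · constructor <;> omega
  let b : Fin m → ℤ := fun i => a i + 1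
  have hb : ∀ i, b i = a i + 1 := fun _ => rfl
  have hsum : ((m:ℝ)) * (((2:ℝ)^n)⁻¹) ^ ρ ∈ { x : ℝ | ∃ (m : ℕ) (a b : Fin m → ℤ),
      0 < m ∧ (∀ i, a i < b i) ∧
      (∀ i, Ico ((a i : ℝ)) ((b i : ℝ)) ⊆ Sann n) ∧
      (E ∩ Sann n ⊆ ⋃ i, Ico ((a i : ℝ)) ((b i : ℝ))) ∧
      x = ∑ i, ((((b i : ℝ)) - ((a i : ℝ))) / 2^n) ^ ρ } := by
    refine ⟨m, a, b, Nat.succ_pos _, fun i => by rw [hb]; exact lt_add_one _, ?_, ?_, ?_⟩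
    · intro i y hy
      rw [hSann]
      rw [hb] at hy
      obtain ⟨h1, h2⟩ := haK i
      have h1R : (P:ℝ) ≤ (a i : ℝ) := by exact_mod_cast h1
      have h2R : (a i : ℝ) ≤ 2*(P:ℝ) - 1 := by exact_mod_cast h2
      have hya : (a i : ℝ) ≤ y := hy.1
      have hyb : y < (a i : ℝ) + 1 := by
        have := hy.2; push_cast at this; exact this
      constructor
      · exact le_trans h1R hya
      · push_cast; linarith
    · intro y hy
      rw [hSann] at hy
      obtain ⟨hyE, hy1, hy2⟩ := hy
      set k : ℤ := ⌊y⌋ with hk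
      have hk1 : P ≤ k := Int.le_floor.2 hy1
      have hk2 : k ≤ 2*P - 1 := by
        have := Int.floor_lt.2 hy2; omega
      have hkK : k ∈ K := by
        rw [hK, Finset.mem_filter, Finset.mem_Icc]
        exact ⟨⟨hk1, hk2⟩, y, hyE, Int.floor_le y, Int.lt_floor_add_one y⟩
      set j := K.equivFin ⟨k, hkK⟩ with hj
      have hjm : (j:ℕ) < m := Nat.lt_succ_of_lt j.2
      refine mem_iUnion.2 ⟨⟨(j:ℕ), hjm⟩, ?_⟩
      have hval : a ⟨(j:ℕ), hjm⟩ = k := by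
        simp only [ha]
        rw [dif_pos j.2]
        have : (⟨(j:ℕ), j.2⟩ : Fin K.card) = j := rfl
        rw [this, he]
        simp [hj]
      rw [hb, hval]
      push_cast
      exact ⟨Int.floor_le y, Int.lt_floor_add_one y⟩
    · have hterm : ∀ i : Fin m, ((((b i : ℤ):ℝ)) - ((a i : ℤ):ℝ)) ^ ρ = ρ → True := fun _ _ => trivial
      have hterm2 : ∀ i : Fin m, ((((b i:ℝ)) - ((a i:ℝ))) / 2^n) ^ ρ = (((2:ℝ)^n)⁻¹) ^ ρ := by
        intro i
        rw [hb]
        push_cast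
        rw [add_sub_cancel_left, one_div]
      rw [Finset.sum_congr rfl fun i _ => hterm2 i, Finset.sum_const, Finset.card_univ,
        Fintype.card_fin, nsmul_eq_mul]
  have hle : nuCov E ρ n ≤ ((m:ℝ)) * (((2:ℝ)^n)⁻¹) ^ ρ :=
    csInf_le (nuCov_bddBelow E ρ n) hsum
  refine hle.trans (mul_le_mul_of_nonneg_right ?_ (Real.rpow_nonneg (by positivity) _))
  have hcard : K.card ≤ (pix (E ∩ Icc 1 ((2:ℝ)^n))).ncard := by
    have hinj : Set.InjOn Int.toNat ↑K := by
      intro x hx y hy hxy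
      rw [Finset.mem_coe, hK, Finset.mem_filter, Finset.mem_Icc] at hx hy
      omega
    have hsub : ↑(K.image Int.toNat) ⊆ pix (E ∩ Icc 1 ((2:ℝ)^n)) := by
      intro q hq
      rw [Finset.coe_image] at hq
      obtain ⟨k, hkK, rfl⟩ := hq
      rw [Finset.mem_coe, hK, Finset.mem_filter, Finset.mem_Icc] at hkK
      obtain ⟨⟨hk1, hk2⟩, x, hxE, hx1, hx2⟩ := hkK
      have hkR : ((k.toNat : ℕ) : ℝ) = (k:ℝ) := by
        exact_mod_cast congrArg Int.cast (Int.toNat_of_nonneg (by omega))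
      have hPk : (P:ℝ) ≤ (k:ℝ) := by exact_mod_cast hk1
      have hk2R : (k:ℝ) ≤ 2*(P:ℝ) - 1 := by exact_mod_cast hk2
      have h1P : (1:ℝ) ≤ (P:ℝ) := by exact_mod_cast hPpos
      refine ⟨x, ⟨hxE, by linarith, ?_⟩, ?_⟩
      · rw [← hcast2]; push_cast; linarith
      · rw [hkR, abs_le]; constructor <;> linarith
    calc K.card = (K.image Int.toNat).card := (Finset.card_image_of_injOn hinj).symm
      _ = ((K.image Int.toNat : Finset ℕ) : Set ℕ).ncard := (Set.ncard_coe_finset _).symm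
      _ ≤ _ := Set.ncard_le_ncard hsub (pix_finite E n)
  rw [hm]
  push_cast
  have : (K.card : ℝ) ≤ ((pix (E ∩ Icc 1 ((2:ℝ)^n))).ncard : ℝ) := by exact_mod_cast hcard
  linarith

lemma rpow_algebra (ρ' ρ : ℝ) (n : ℕ) :
    (2:ℝ) * (2:ℝ)^(ρ' * n) * (((2:ℝ)^n)⁻¹) ^ ρ = 2 * ((2:ℝ)^(ρ' - ρ))^n := by
  rw [← Real.rpow_natCast 2 n, ← Real.rpow_neg (by norm_num : (0:ℝ) ≤ 2),
    ← Real.rpow_mul (by norm_num : (0:ℝ) ≤ 2), mul_assoc,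
    ← Real.rpow_add (by norm_num : (0:ℝ) < 2),
    ← Real.rpow_natCast ((2:ℝ)^(ρ' - ρ)) n,
    ← Real.rpow_mul (by norm_num : (0:ℝ) ≤ 2)]
  have : ρ' * (n:ℝ) + -(n:ℝ) * ρ = (ρ' - ρ) * (n:ℝ) := by ring
  rw [this]

lemma summable_nuCov (E : Set ℝ) (ρ' ρ : ℝ) (h0 : 0 ≤ ρ') (hlt : ρ' < ρ)
    (hev : ∀ᶠ n : ℕ in atTop,
      Real.logb 2 ((pix (E ∩ Icc 1 ((2:ℝ)^n))).ncard : ℝ) / n < ρ') :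
    Summable (fun n => nuCov E ρ n) := by
  obtain ⟨N0, hN0⟩ := eventually_atTop.1 hev
  set N := max N0 1 with hN
  set r : ℝ := (2:ℝ)^(ρ' - ρ) with hr
  have hr0 : 0 ≤ r := Real.rpow_nonneg (by norm_num) _
  have hr1 : r < 1 := Real.rpow_lt_one_of_one_lt_of_neg (by norm_num) (by linarith)
  have hbound : ∀ n : ℕ, N ≤ n → nuCov E ρ n ≤ 2 * r ^ n := by
    intro n hn
    have hn1 : 1 ≤ n := le_trans (le_max_right _ _) hn
    have hnR : (0:ℝ) < n := by exact_mod_cast hn1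
    set Nn := (pix (E ∩ Icc 1 ((2:ℝ)^n))).ncard with hNn
    have hlogb : Real.logb 2 (Nn : ℝ) < ρ' * n := by
      have := hN0 n (le_trans (le_max_left _ _) hn)
      rw [div_lt_iff₀ hnR] at this
      linarith [this]
    have hNnlt : (Nn : ℝ) < (2:ℝ)^(ρ' * n) := by
      rcases Nat.eq_zero_or_pos Nn with h | h
      · rw [h]; push_cast; positivity
      · exact (Real.logb_lt_iff_lt_rpow (by norm_num) (by exact_mod_cast h)).1 hlogb
    have hone : (1:ℝ) ≤ (2:ℝ)^(ρ' * n) :=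
      Real.one_le_rpow (by norm_num) (mul_nonneg h0 (Nat.cast_nonneg n))
    calc nuCov E ρ n ≤ ((Nn : ℝ) + 1) * (((2:ℝ)^n)⁻¹) ^ ρ := nuCov_le_card E ρ n hn1
      _ ≤ (2 * (2:ℝ)^(ρ' * n)) * (((2:ℝ)^n)⁻¹) ^ ρ := by
          apply mul_le_mul_of_nonneg_right _ (Real.rpow_nonneg (by positivity) _)
          linarith
      _ = 2 * r ^ n := rpow_algebra ρ' ρ n
  rw [← summable_nat_add_iff N]
  apply Summable.of_nonneg_of_le (fun k => nuCov_nonneg E ρ (k + N))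
    (fun k => hbound (k + N) (Nat.le_add_left N k))
  have : Summable (fun k : ℕ => (2 * r ^ N) * r ^ k) :=
    ((summable_geometric_of_lt_one hr0 hr1).mul_left _)
  apply this.congr
  intro k
  rw [pow_add]
  ring

theorem dimH_le_denpix (E : Set ℝ) (hE : E ⊆ Ici 0) : DimH E ≤ DenPix E := by
  refine le_of_forall_pos_le_add fun ε hε => ?_
  have hd0 := denPix_nonneg E
  have hmem : DenPix E + ε ∈ {ρ : ℝ | 0 ≤ ρ ∧ Summable (fun n => nuCov E ρ n)} := by
    refine ⟨by linarith, ?_⟩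
    refine summable_nuCov E (DenPix E + ε/2) _ (by linarith) (by linarith) ?_
    exact eventually_lt_of_limsup_lt (by simp only [DenPix]; linarith) (u_isBounded E)
  exact csInf_le ⟨0, fun x hx => hx.1⟩ hmem
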